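/- Right symmetrized bitableaux and Young symmetrizers, general case: let S and T be multilinear tableaux of the same shape λ ⊢ h, let I: {1,…,h} → {1,…,n} and J: {1,…,h} → {1,…,d} be arbitrary maps, and let U = I∘S and V = J∘T be the tableaux of shape λ obtained by applying I and J entrywise to S and T. Then in ℂ[M_{n,d}] one has (U|⎕V) = (−1)^(h choose 2) · Σ_{σ∈R(S), τ∈C(T)} sgn(σ) · Π_{k=1}^h x_{I((σ θ_{ST} τ)(k)), J(k)}. -/

import Mathlib

open MvPolynomial

noncomputable section

def e2 : List ℕ → ℕ
  | [] => 0
  | a :: l => a * l.sum + e2 l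

def IsShape (h : ℕ) (lam : List ℕ) : Prop :=
  lam.Pairwise (· ≥ ·) ∧ (∀ a ∈ lam, 0 < a) ∧ lam.sum = h

def biprod (n d : ℕ) (ω : List (Fin n)) (ϖ : List (Fin d)) : MvPolynomial (Fin n × Fin d) ℂ :=
  if hl : ω.length = ϖ.length then
    (-1 : MvPolynomial (Fin n × Fin d) ℂ) ^ (ω.length.choose 2) *
      (Matrix.of fun r s : Fin ω.length =>
        (X (ω.get r, ϖ.get (Fin.cast hl s)) : MvPolynomial (Fin n × Fin d) ℂ)).det
  else 0

def rowWord (n : ℕ) (lam : List ℕ) (T : ℕ → ℕ → Fin n) (r : ℕ) : List (Fin n) :=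
  (List.range (lam.getD r 0)).map (T r)

def bitab (n d : ℕ) (lam : List ℕ) (S : ℕ → ℕ → Fin n) (T : ℕ → ℕ → Fin d) :
    MvPolynomial (Fin n × Fin d) ℂ :=
  (-1 : MvPolynomial (Fin n × Fin d) ℂ) ^ e2 lam *
    ∏ r ∈ Finset.range lam.length, biprod n d (rowWord n lam S r) (rowWord d lam T r)

def IsStandard (n : ℕ) (lam : List ℕ) (T : ℕ → ℕ → Fin n) : Prop :=
  (∀ r c, c + 1 < lam.getD r 0 → T r c < T r (c + 1)) ∧
  (∀ r c, c < lam.getD (r + 1) 0 → T r c ≤ T (r + 1) c)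

/-- the length of column `c` of the shape `lam`: the number of rows containing
a cell in column `c` -/
def colLen (lam : List ℕ) (c : ℕ) : ℕ := lam.countP (fun a => decide (c < a))

/-- `T̄`: the tableau obtained from `T` by applying, within each column `c` of the
shape `lam`, the permutation `π c` of the entries of that column -/
def applyColPerm (d : ℕ) (lam : List ℕ) (T : ℕ → ℕ → Fin d)
    (π : ∀ c : Fin (lam.headD 0), Equiv.Perm (Fin (colLen lam c))) :
    ℕ → ℕ → Fin d := fun r c =>
  if h : c < lam.headD 0 ∧ r < colLen lam c then
    T ((π ⟨c, h.1⟩) ⟨r, h.2⟩ : ℕ) c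
  else T r c

/-- the right symmetrized bitableau `(S|⎕T)`: the sum of `(S|T̄)` over all tuples
of column permutations (with multiplicity) -/
def symmBitab (n d : ℕ) (lam : List ℕ) (S : ℕ → ℕ → Fin n) (T : ℕ → ℕ → Fin d) :
    MvPolynomial (Fin n × Fin d) ℂ :=
  ∑ π : ∀ c : Fin (lam.headD 0), Equiv.Perm (Fin (colLen lam c)),
    bitab n d lam S (applyColPerm d lam T π)

/-- the (row-by-row, 0-indexed) cell number of the cell in row `r`, column `c` -/
def idx (lam : List ℕ) (r c : ℕ) : ℕ := (lam.take r).sum + c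

/-- the row of the `k`-th cell (cells numbered row by row, 0-indexed) -/
def cellRow : List ℕ → ℕ → ℕ
  | [], _ => 0
  | a :: l, k => if k < a then 0 else cellRow l (k - a) + 1

/-- the column of the `k`-th cell -/
def cellCol : List ℕ → ℕ → ℕ
  | [], k => k
  | a :: l, k => if k < a then k else cellCol l (k - a)

/-!
Expanding each biproduct by the Leibniz formula writes a bitableau `(U|V̄)` as `(-1)^(h choose 2)`
times a signed sum, over tuples `ρ` of row permutations, of monomials; the signs combine because
`h choose 2 = e2 λ + Σ_r (λ_r choose 2)`. Numbering the cells row by row, a tuple of row (resp.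
column) permutations is a permutation of the cells preserving rows (resp. columns), and
conjugating by `S` (resp. `T`) identifies these tuples bijectively with `R(S)` (resp. `C(T)`),
without changing signs. Reindexing each monomial by the entry `k = V̄(cell)` turns it into
`Π_k x_{I((σ θ_{ST} τ)(k)), J(k)}`, where `τ` comes from the inverses of the column permutations.
-/

open Equiv

namespace Equiv.Perm

variable {ι : Type*} {β : ι → Type*}

theorem sigmaCongrRight_mulSingle [DecidableEq ι] (i : ι) (g : Perm (β i)) :
    Perm.sigmaCongrRight (Pi.mulSingle i g) = g.extendDomain (sigmaSubtype i).symm := by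
  ext1 ⟨j, b⟩
  by_cases hj : j = i
  · subst hj
    simp [extendDomain, sigmaSubtype]
  · simp [extendDomain, hj]

theorem sign_sigmaCongrRight [DecidableEq ι] [Fintype ι] [∀ i, DecidableEq (β i)]
    [∀ i, Fintype (β i)] (ρ : ∀ i, Perm (β i)) :
    sign (Perm.sigmaCongrRight ρ) = ∏ i, sign (ρ i) := by
  have key := MonoidHom.pi_ext (f := sign.comp (sigmaCongrRightHom β))
    (g := ∏ i, sign.comp (Pi.evalMonoidHom (fun i => Perm (β i)) i)) fun i g => by
      rw [MonoidHom.finsetProd_apply, Finset.prod_eq_single i (fun j _ hj => by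
        simp [Pi.mulSingle_eq_of_ne hj]) (by simp)]
      simp [sigmaCongrRight_mulSingle]
  simpa [MonoidHom.finsetProd_apply] using DFunLike.congr_fun key ρ

theorem exists_sigmaCongrRight_eq (q : Perm (Σ i, β i)) (hq : ∀ p, (q p).1 = p.1) :
    ∃ ρ : ∀ i, Perm (β i), Perm.sigmaCongrRight ρ = q := by
  refine ⟨fun i => (sigmaSubtype i).permCongr (q.subtypePerm fun s => by simp [hq]), ?_⟩
  ext1 ⟨i, b⟩
  have mk_sigmaSubtype : ∀ s : {s : Σ i, β i // s.1 = i}, ⟨i, sigmaSubtype i s⟩ = s.1 :=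
    fun ⟨⟨_, _⟩, rfl⟩ => rfl
  exact mk_sigmaSubtype ⟨q ⟨i, b⟩, hq _⟩

theorem sum_filter_fiberwise_eq_sum_sigmaCongrRight {α M : Type*} [Fintype α] [DecidableEq α]
    [AddCommMonoid M] [Fintype (∀ i, Perm (β i))] (e : α ≃ Σ i, β i)
    (p : Perm α → Prop) [DecidablePred p] (hp : ∀ σ, p σ ↔ ∀ a, (e (σ a)).1 = (e a).1)
    (g : Perm α → M) :
    ∑ σ ∈ Finset.univ.filter p, g σ =
      ∑ ρ : ∀ i, Perm (β i), g (e.symm.permCongr (Perm.sigmaCongrRight ρ)) := by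
  symm
  refine Finset.sum_bij (fun ρ _ => e.symm.permCongr (Perm.sigmaCongrRight ρ)) ?_ ?_ ?_
    fun _ _ => rfl
  · intro ρ _
    simp [hp, Equiv.permCongr_apply]
  · intro ρ _ ρ' _ h
    exact sigmaCongrRightHom_injective (e.symm.permCongr.injective h)
  · intro σ hσ
    obtain ⟨ρ, hρ⟩ := exists_sigmaCongrRight_eq (e.permCongr σ) fun x => by
      simpa [Equiv.permCongr_apply] using ((hp σ).1 (Finset.mem_filter.1 hσ).2 (e.symm x))
    exact ⟨ρ, Finset.mem_univ _, by rw [hρ, ← permCongr_symm, Equiv.symm_apply_apply]⟩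

end Equiv.Perm

section Cells

variable {lam : List ℕ}

@[simp]
lemma idx_cons_zero (a : ℕ) (l : List ℕ) (c : ℕ) : idx (a :: l) 0 c = c := by
  simp [idx]

@[simp]
lemma idx_cons_succ (a : ℕ) (l : List ℕ) (r c : ℕ) : idx (a :: l) (r + 1) c = a + idx l r c := by
  simp [idx, add_assoc]

lemma cellRow_lt {k : ℕ} (hk : k < lam.sum) : cellRow lam k < lam.length := by
  induction lam generalizing k with
  | nil => simp at hk
  | cons a l ih =>
    rw [List.sum_cons] at hk
    by_cases hka : k < a
    · simp [cellRow, hka]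
    · simpa [cellRow, hka] using ih (k := k - a) (by omega)

lemma cellCol_lt {k : ℕ} (hk : k < lam.sum) : cellCol lam k < lam.getD (cellRow lam k) 0 := by
  induction lam generalizing k with
  | nil => simp at hk
  | cons a l ih =>
    rw [List.sum_cons] at hk
    by_cases hka : k < a
    · simp [cellRow, cellCol, hka]
    · simpa [cellRow, cellCol, hka] using ih (k := k - a) (by omega)

lemma idx_cellRow_cellCol {k : ℕ} (hk : k < lam.sum) :
    idx lam (cellRow lam k) (cellCol lam k) = k := by
  induction lam generalizing k with
  | nil => simp at hk
  | cons a l ih =>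
    rw [List.sum_cons] at hk
    by_cases hka : k < a
    · simp [cellRow, cellCol, hka]
    · simp [cellRow, cellCol, hka, ih (k := k - a) (by omega)]
      omega

lemma idx_lt_sum {r c : ℕ} (hc : c < lam.getD r 0) : idx lam r c < lam.sum := by
  induction lam generalizing r with
  | nil => simp at hc
  | cons a l ih =>
    cases r with
    | zero => simp at hc ⊢; omega
    | succ r => simpa using ih (r := r) (by simpa using hc)

lemma cellRow_idx_and_cellCol_idx {r c : ℕ} (hc : c < lam.getD r 0) :
    cellRow lam (idx lam r c) = r ∧ cellCol lam (idx lam r c) = c := by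
  induction lam generalizing r with
  | nil => simp at hc
  | cons a l ih =>
    cases r with
    | zero => simp_all [cellRow, cellCol]
    | succ r => simpa [cellRow, cellCol] using ih (r := r) (by simpa using hc)

lemma getD_le_headD (hs : lam.Pairwise (· ≥ ·)) (r : ℕ) : lam.getD r 0 ≤ lam.headD 0 := by
  cases lam with
  | nil => simp
  | cons a l =>
    cases r with
    | zero => simp
    | succ r =>
      simp only [List.getD_cons_succ, List.headD_cons]
      rcases lt_or_ge r l.length with hr | hr
      · rw [List.getD_eq_getElem _ _ hr]
        exact (List.pairwise_cons.1 hs).1 _ (List.getElem_mem hr)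
      · rw [List.getD_eq_default _ _ hr]
        exact Nat.zero_le a

lemma lt_colLen_iff (hs : lam.Pairwise (· ≥ ·)) {r c : ℕ} :
    r < colLen lam c ↔ c < lam.getD r 0 := by
  induction lam generalizing r with
  | nil => simp [colLen]
  | cons a l ih =>
    by_cases hca : c < a
    · cases r with
      | zero => simp [colLen, hca]
      | succ r => simpa [colLen, List.countP_cons, hca] using ih hs.of_cons
    · have hzero : colLen (a :: l) c = 0 := List.countP_eq_zero.2 fun b hb => by
        rcases List.mem_cons.1 hb with rfl | hb
        · simpa using hca
        · have := (List.pairwise_cons.1 hs).1 b hb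
          simp only [decide_eq_true_eq]
          omega
      have := getD_le_headD hs r
      simp only [hzero, List.headD_cons] at this ⊢
      omega

lemma Sigma.fin_ext {ι : Type*} {f : ι → ℕ} {p q : Σ i, Fin (f i)} (h₁ : p.1 = q.1)
    (h₂ : (p.2 : ℕ) = q.2) : p = q := by
  obtain ⟨i, x⟩ := p
  obtain ⟨j, y⟩ := q
  cases h₁
  simp_all [Fin.ext_iff]

variable (lam)

def rowEquiv : Fin lam.sum ≃ Σ r : Fin lam.length, Fin (lam.getD r 0) where
  toFun k := ⟨⟨cellRow lam k, cellRow_lt k.2⟩, ⟨cellCol lam k, cellCol_lt k.2⟩⟩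
  invFun p := ⟨idx lam p.1 p.2, idx_lt_sum p.2.2⟩
  left_inv k := Fin.ext (idx_cellRow_cellCol k.2)
  right_inv := fun ⟨_, _, hc⟩ =>
    Sigma.fin_ext (Fin.ext (cellRow_idx_and_cellCol_idx hc).1) (cellRow_idx_and_cellCol_idx hc).2

def colEquiv (hs : lam.Pairwise (· ≥ ·)) :
    Fin lam.sum ≃ Σ c : Fin (lam.headD 0), Fin (colLen lam c) where
  toFun k := ⟨⟨cellCol lam k, (cellCol_lt k.2).trans_le (getD_le_headD hs _)⟩,
    ⟨cellRow lam k, (lt_colLen_iff hs).2 (cellCol_lt k.2)⟩⟩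
  invFun p := ⟨idx lam p.2 p.1, idx_lt_sum ((lt_colLen_iff hs).1 p.2.2)⟩
  left_inv k := Fin.ext (idx_cellRow_cellCol k.2)
  right_inv := fun ⟨_, _, hr⟩ =>
    have hc := cellRow_idx_and_cellCol_idx ((lt_colLen_iff hs).1 hr)
    Sigma.fin_ext (Fin.ext hc.2) hc.1

end Cells

lemma biprod_map_range_eq_sum (n d m : ℕ) (f : ℕ → Fin n) (g : ℕ → Fin d) :
    biprod n d ((List.range m).map f) ((List.range m).map g) =
      (-1) ^ m.choose 2 *
        ∑ ρ : Perm (Fin m), ((Perm.sign ρ : ℤ) : MvPolynomial (Fin n × Fin d) ℂ) *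
          ∏ b : Fin m, X (f (ρ b), g b) := by
  have hlen : ((List.range m).map f).length = m := by simp
  rw [biprod, dif_pos (by simp), ← Matrix.det_reindex_self (finCongr hlen), Matrix.det_apply']
  simp [hlen]

lemma e2_add_sum_choose_two (lam : List ℕ) :
    e2 lam + ∑ r ∈ Finset.range lam.length, (lam.getD r 0).choose 2 = lam.sum.choose 2 := by
  induction lam with
  | nil => simp [e2]
  | cons a l ih =>
    rw [List.sum_cons, Nat.add_choose_eq]
    simp [e2, Finset.sum_range_succ', Finset.Nat.antidiagonal_succ, ← ih]
    ring

lemma bitab_eq_sum (n d : ℕ) (lam : List ℕ) (U : ℕ → ℕ → Fin n) (V : ℕ → ℕ → Fin d) :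
    bitab n d lam U V = (-1) ^ lam.sum.choose 2 *
      ∑ ρ : ∀ r : Fin lam.length, Perm (Fin (lam.getD r 0)),
        ((Perm.sign (Perm.sigmaCongrRight ρ) : ℤ) : MvPolynomial (Fin n × Fin d) ℂ) *
          ∏ p : Σ r : Fin lam.length, Fin (lam.getD r 0), X (U p.1 (ρ p.1 p.2), V p.1 p.2) := by
  simp only [bitab, rowWord, biprod_map_range_eq_sum]
  rw [Finset.prod_mul_distrib, Finset.prod_pow_eq_pow_sum, ← mul_assoc, ← pow_add,
    e2_add_sum_choose_two, Finset.prod_range (fun r => ∑ ρ : Perm (Fin (lam.getD r 0)), _),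
    Finset.prod_univ_sum, Fintype.piFinset_univ]
  congr 1
  refine Finset.sum_congr rfl fun ρ _ => ?_
  rw [Finset.prod_mul_distrib, Perm.sign_sigmaCongrRight, Fintype.prod_sigma]
  push_cast
  rfl

section Monomial

variable {n d : ℕ} {lam : List ℕ} (hs : lam.Pairwise (· ≥ ·))

lemma applyColPerm_cellRow_cellCol {V : ℕ → ℕ → Fin d} {T : Perm (Fin lam.sum)}
    {J : Fin lam.sum → Fin d}
    (hV : ∀ r c (_ : c < lam.getD r 0) (hi : idx lam r c < lam.sum),
      V r c = J (T ⟨idx lam r c, hi⟩))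
    (π : ∀ c : Fin (lam.headD 0), Perm (Fin (colLen lam c))) (x : Fin lam.sum) :
    applyColPerm d lam V π (cellRow lam x) (cellCol lam x) =
      J (T ((colEquiv lam hs).symm (Perm.sigmaCongrRight π (colEquiv lam hs x)))) := by
  have hx := (colEquiv lam hs x).2.2
  rw [applyColPerm, dif_pos ⟨(colEquiv lam hs x).1.2, hx⟩]
  exact hV _ _ ((lt_colLen_iff hs).1 (Fin.isLt _)) _

lemma prod_X_applyColPerm {S T : Perm (Fin lam.sum)} {I : Fin lam.sum → Fin n}
    {J : Fin lam.sum → Fin d} {U : ℕ → ℕ → Fin n} {V : ℕ → ℕ → Fin d}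
    (hU : ∀ r c (_ : c < lam.getD r 0) (hi : idx lam r c < lam.sum),
      U r c = I (S ⟨idx lam r c, hi⟩))
    (hV : ∀ r c (_ : c < lam.getD r 0) (hi : idx lam r c < lam.sum),
      V r c = J (T ⟨idx lam r c, hi⟩))
    (ρ : ∀ r : Fin lam.length, Perm (Fin (lam.getD r 0)))
    (π : ∀ c : Fin (lam.headD 0), Perm (Fin (colLen lam c))) :
    ∏ p : Σ r : Fin lam.length, Fin (lam.getD r 0),
        (X (U p.1 (ρ p.1 p.2), applyColPerm d lam V π p.1 p.2) : MvPolynomial (Fin n × Fin d) ℂ) =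
      ∏ k, X (I ((S.symm.trans (rowEquiv lam)).symm.permCongr (Perm.sigmaCongrRight ρ)
        (S (T.symm ((T.symm.trans (colEquiv lam hs)).symm.permCongr
          (Perm.sigmaCongrRight fun c => (π c)⁻¹) k)))), J k) := by
  set R := rowEquiv lam
  set C := colEquiv lam hs
  calc _ = ∏ x, (X (I (S (R.symm (Perm.sigmaCongrRight ρ (R x)))),
        J (T (C.symm (Perm.sigmaCongrRight π (C x))))) : MvPolynomial (Fin n × Fin d) ℂ) := by
        rw [← R.prod_comp]
        refine Finset.prod_congr rfl fun x _ => ?_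
        rw [hU _ _ (Fin.isLt _) (idx_lt_sum (Fin.isLt _))]
        exact congrArg (fun b => X (_, b)) (applyColPerm_cellRow_cellCol hs hV π x)
    -- substitute `k = T (π̂ x)`, the entry of `V̄` in cell `x`
    _ = _ := Fintype.prod_equiv ((C.symm.permCongr (Perm.sigmaCongrRight π)).trans T) _ _
        fun x => by simp [permCongr_apply]

end Monomial

theorem symmBitab_eq_youngSymmetrizer_general_general (n d : ℕ)
    (h : ℕ) (lam : List ℕ) (hlam : IsShape h lam)
    (S T : Equiv.Perm (Fin h))
    (I : Fin h → Fin n) (J : Fin h → Fin d)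
    (U : ℕ → ℕ → Fin n) (V : ℕ → ℕ → Fin d)
    (hU : ∀ r c (_ : c < lam.getD r 0) (hi : idx lam r c < h),
      U r c = I (S ⟨idx lam r c, hi⟩))
    (hV : ∀ r c (_ : c < lam.getD r 0) (hi : idx lam r c < h),
      V r c = J (T ⟨idx lam r c, hi⟩)) :
    symmBitab n d lam U V =
      (-1 : MvPolynomial (Fin n × Fin d) ℂ) ^ h.choose 2 *
        ∑ σ ∈ Finset.univ.filter
            (fun σ : Equiv.Perm (Fin h) =>
              ∀ a, cellRow lam (S.symm (σ a)) = cellRow lam (S.symm a)),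
          ∑ τ ∈ Finset.univ.filter
              (fun τ : Equiv.Perm (Fin h) =>
                ∀ a, cellCol lam (T.symm (τ a)) = cellCol lam (T.symm a)),
            ((Equiv.Perm.sign σ : ℤ) : MvPolynomial (Fin n × Fin d) ℂ) *
              ∏ k : Fin h, X (I (σ (S (T.symm (τ k)))), J k) := by
  obtain ⟨hs, -, rfl⟩ := hlam
  have hrow : ∀ σ : Perm (Fin lam.sum),
      (∀ a, cellRow lam (S.symm (σ a)) = cellRow lam (S.symm a)) ↔
        ∀ a, ((S.symm.trans (rowEquiv lam)) (σ a)).1 = ((S.symm.trans (rowEquiv lam)) a).1 :=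
    fun _ => by simp only [Fin.ext_iff]; rfl
  have hcol : ∀ τ : Perm (Fin lam.sum),
      (∀ a, cellCol lam (T.symm (τ a)) = cellCol lam (T.symm a)) ↔
        ∀ a, ((T.symm.trans (colEquiv lam hs)) (τ a)).1 =
          ((T.symm.trans (colEquiv lam hs)) a).1 :=
    fun _ => by simp only [Fin.ext_iff]; rfl
  simp only [symmBitab, bitab_eq_sum, ← Finset.mul_sum]
  rw [Finset.sum_comm, Perm.sum_filter_fiberwise_eq_sum_sigmaCongrRight _ _ hrow]
  congr 1
  refine Finset.sum_congr rfl fun ρ _ => ?_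
  rw [Perm.sum_filter_fiberwise_eq_sum_sigmaCongrRight _ _ hcol, ← Equiv.sum_comp (Equiv.inv _),
    Finset.mul_sum]
  refine Finset.sum_congr rfl fun π _ => ?_
  rw [prod_X_applyColPerm hs hU hV, Perm.sign_permCongr]
  simp only [Equiv.inv_apply, Pi.inv_apply, inv_inv]

/-- right symmetrized bitableaux and Young symmetrizers, the
general case: for multilinear tableaux `S, T` of the same shape `λ ⊢ h`
(encoded as permutations: the entry of the cell numbered `k` is `S k`),
arbitrary maps `I : {1,…,h} → {1,…,n}`, `J : {1,…,h} → {1,…,d}`, and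
`U = I∘S`, `V = J∘T` (encoded cellwise as functions `ℕ → ℕ → Fin _`), one has
`(U|⎕V) = (−1)^(h choose 2) · Σ_{σ∈R(S),τ∈C(T)} sgn(σ) · Π_k x_{I((σθ_{ST}τ)(k)), J(k)}`
in `ℂ[M_{n,d}]`, where `θ_{ST} = S ∘ T⁻¹`. -/
theorem symmBitab_eq_youngSymmetrizer_general (n d : ℕ) (hn : 0 < n) (hd : 0 < d)
    (h : ℕ) (lam : List ℕ) (hlam : IsShape h lam)
    (S T : Equiv.Perm (Fin h))
    (I : Fin h → Fin n) (J : Fin h → Fin d)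
    (U : ℕ → ℕ → Fin n) (V : ℕ → ℕ → Fin d)
    (hU : ∀ r c (_ : c < lam.getD r 0) (hi : idx lam r c < h),
      U r c = I (S ⟨idx lam r c, hi⟩))
    (hV : ∀ r c (_ : c < lam.getD r 0) (hi : idx lam r c < h),
      V r c = J (T ⟨idx lam r c, hi⟩)) :
    symmBitab n d lam U V =
      (-1 : MvPolynomial (Fin n × Fin d) ℂ) ^ h.choose 2 *
        ∑ σ ∈ Finset.univ.filter
            (fun σ : Equiv.Perm (Fin h) =>
              ∀ a, cellRow lam (S.symm (σ a)) = cellRow lam (S.symm a)),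
          ∑ τ ∈ Finset.univ.filter
              (fun τ : Equiv.Perm (Fin h) =>
                ∀ a, cellCol lam (T.symm (τ a)) = cellCol lam (T.symm a)),
            ((Equiv.Perm.sign σ : ℤ) : MvPolynomial (Fin n × Fin d) ℂ) *
              ∏ k : Fin h, X (I (σ (S (T.symm (τ k)))), J k) :=
  symmBitab_eq_youngSymmetrizer_general_general n d h lam hlam S T I J U V hU hV

end
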